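/- Let G be a noncompact locally compact group, 𝒜 a unital left-translation-invariant amenable C*-subalgebra of LUC(G), T an 𝒜-set in G, and suppose UT is right translation-compact for some neighbourhood U of e. Then μ(ε(V)·closure(ε(T))) = 0 for every relatively compact neighbourhood V of e and every left invariant mean μ on 𝒜 (regarded as a Borel measure on G^𝒜). -/

import Mathlib

/-!
Choose a relatively compact open `U₀ ∋ 1` inside `U`. The `𝒜`-set property gives `V₀` and, for
every `T₁ ⊆ T`, a continuous `ψ_{T₁} : G^𝒜 → [0, 1]` equal to `1` on `ε(V₀T₁)` and to `0` on
`ε(G ∖ U₀T₁)`; the invariant mean makes `μ` invariant under `G`, tested on continuous functions.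
Once `∫ ψ_T dμ = 0`, the closed sets `{ψ_T(g ·) = 1}` are null, and finitely many of them cover
`ε(V)·closure(ε(T))`.

When `U₀T₁` is relatively compact, noncompactness of `G` gives `s₀, s₁, …` for which the
translates `ψ_{T₁}(sᵢ ·)` have disjoint supports on `ε(G)`, so `n ∫ ψ_{T₁} dμ ≤ 1` for all `n`;
hence every relatively compact subset of `U₀T` has null closure in `G^𝒜`. If `∫ ψ_T dμ > 0`,
Cauchy–Schwarz for `∑_{i<n} ψ_W(sᵢ ·)`, where `ψ_W = ∏_{w ∈ W} ψ_T(w ·)`, produces `σ` outside any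
given compact set with `∫ ψ_{W ∪ Wσ} dμ > 0`. Iterating yields a non-relatively-compact `L` each
finite subset of which lies in some `W ∋ 1` with `∫ ψ_W dμ > 0`. For the finite `F ⊆ L` given by
right translation-compactness of `UT`, the set `{ψ_W ≠ 0}` lies in the closure of the image of the
relatively compact set `⋂_{w ∈ W} w⁻¹U₀T ⊆ U₀T`, which is null: a contradiction.
-/

open Pointwise

/-- An abstract model of the compactification `G^𝒜` associated to a unital
left-translation-invariant C*-subalgebra `A` of `CB(G)`: a compact Hausdorff space `X` together
with the (dense-range) evaluation map `ε : G → X`, the natural left action of `G` on `X`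
(`(ε(s)x)(f) = x(ₛf)`), and the Gelfand correspondence identifying `A` with `C(X)`. -/
structure GCompactification (G : Type*) [TopologicalSpace G] [Group G]
    (A : Set (G → ℂ)) (X : Type*) [TopologicalSpace X] [CompactSpace X] [T2Space X] where
  eps : G → X
  dense : DenseRange eps
  act : G → X → X
  act_eps : ∀ s t : G, act s (eps t) = eps (s * t)
  act_mul : ∀ s t : G, ∀ x : X, act (s * t) x = act s (act t x)
  act_cont : ∀ s : G, Continuous (act s)
  gelfand : (G → ℂ) → (X → ℂ)
  gelfand_cont : ∀ f ∈ A, Continuous (gelfand f)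
  gelfand_eps : ∀ f ∈ A, ∀ s : G, gelfand f (eps s) = f s
  mem_of_cont : ∀ φ : X → ℂ, Continuous φ → (fun s => φ (eps s)) ∈ A

/-- The semigroup compactification `G^𝒜` of an admissible subalgebra `A`: additionally `X` carries
an associative multiplication which is right topological, extends that of `G`, and restricts to
the action of `G`. -/
structure GSemigroupCompactification (G : Type*) [TopologicalSpace G] [Group G]
    (A : Set (G → ℂ)) (X : Type*) [TopologicalSpace X] [CompactSpace X] [T2Space X]
    extends GCompactification G A X where
  mul : X → X → X
  mul_assoc : ∀ x y z : X, mul (mul x y) z = mul x (mul y z)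
  right_cont : ∀ y : X, Continuous fun x => mul x y
  eps_act : ∀ (s : G) (x : X), mul (eps s) x = act s x

/-- `T` is an `𝒜`-set: for every open neighbourhood `U` of `e` there is an open neighbourhood `V`
of `e` with `closure V ⊆ U` such that for each `T₁ ⊆ T` some `h ∈ A` is `1` on `VT₁` and `0` off
`UT₁`. -/
def IsASet {G : Type*} [TopologicalSpace G] [Group G] (A : Set (G → ℂ)) (T : Set G) : Prop :=
  ∀ U : Set G, IsOpen U → (1 : G) ∈ U →
    ∃ V : Set G, IsOpen V ∧ (1 : G) ∈ V ∧ closure V ⊆ U ∧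
      ∀ T₁ ⊆ T, ∃ h ∈ A, (∀ x ∈ V * T₁, h x = 1) ∧ (∀ x ∉ U * T₁, h x = 0)

/-- Right translation-compact subsets of a topological group. -/
def RightTranslationCompact {G : Type*} [Group G] [TopologicalSpace G] (T : Set G) : Prop :=
  ∀ L : Set G, ¬ IsCompact (closure L) →
    ∃ F : Set G, F ⊆ L ∧ F.Finite ∧ IsCompact (closure (⋂ b ∈ F, (b * ·) ⁻¹' T))

open MeasureTheory

open Topology

section TopologicalGroup

variable {G : Type*} [TopologicalSpace G] [Group G] [IsTopologicalGroup G]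

theorem exists_seq_mul_inv_notMem [NoncompactSpace G] {K : Set G} (hK : IsCompact K) :
    ∃ s : ℕ → G, ∀ i j, i ≠ j → s j * (s i)⁻¹ ∉ K := by
  obtain ⟨s, -, hs⟩ := exists_seq_of_forall_finset_exists (fun _ : G => True)
    (fun a b => b * a⁻¹ ∉ K ∧ a * b⁻¹ ∉ K) fun F _ => by
      have hKF : IsCompact (⋃ a ∈ F, ((· * a) '' K ∪ (·⁻¹ * a) '' K)) :=
        F.isCompact_biUnion fun a _ =>
          (hK.image (continuous_mul_const a)).union (hK.image (by fun_prop))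
      obtain ⟨b, hb⟩ := (Set.ne_univ_iff_exists_notMem _).1 hKF.ne_univ
      refine ⟨b, trivial, fun a ha => ⟨fun h => hb ?_, fun h => hb ?_⟩⟩
      · exact Set.mem_biUnion ha (.inl ⟨b * a⁻¹, h, by group⟩)
      · exact Set.mem_biUnion ha (.inr ⟨a * b⁻¹, h, by group⟩)
  exact ⟨s, fun i j hij => (lt_or_gt_of_ne hij).elim (fun h => (hs i j h).1) fun h => (hs j i h).2⟩

theorem not_isCompact_closure_range_of_inv_mul_notMem {N : Set G} (hN : N ∈ 𝓝 1) {s : ℕ → G}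
    (hs : ∀ i j, i < j → (s i)⁻¹ * s j ∉ N) : ¬ IsCompact (closure (Set.range s)) := by
  intro hcpt
  obtain ⟨M, hM, -, hMinv, hMN⟩ := exists_closed_nhds_one_inv_eq_mul_subset hN
  obtain ⟨t, ht⟩ := compact_covered_by_mul_left_translates hcpt
    ⟨1, mem_interior_iff_mem_nhds.2 hM⟩
  have hcover : ∀ i, ∃ g : t, g.1 * s i ∈ M := fun i => by
    obtain ⟨g, hg, hgs⟩ := Set.mem_iUnion₂.1 (ht (subset_closure ⟨i, rfl⟩))
    exact ⟨⟨g, hg⟩, hgs⟩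
  choose c hc using hcover
  obtain ⟨i, j, hij, hcij⟩ := Finite.exists_ne_map_eq_of_infinite c
  have hmem : ∀ a b, c a = c b → (s a)⁻¹ * s b ∈ N := fun a b h => by
    rw [show (s a)⁻¹ * s b = ((c a : G) * s a)⁻¹ * ((c b : G) * s b) by rw [h]; group]
    refine hMN (Set.mul_mem_mul ?_ (hc b))
    rw [← hMinv]
    exact Set.inv_mem_inv.2 (hc a)
  rcases lt_or_gt_of_ne hij with h | h
  · exact hs i j h (hmem i j hcij)
  · exact hs j i h (hmem j i hcij.symm)

theorem exists_not_isCompact_closure_of_forall_exists_not_subset [LocallyCompactSpace G]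
    (P : Finset G → Prop) {W₀ : Finset G} (h₀ : P W₀)
    (hP : ∀ W, P W → ∀ K : Set G, IsCompact K → ∃ W', P W' ∧ W ⊆ W' ∧ ¬ (W' : Set G) ⊆ K) :
    ∃ L : Set G, ¬ IsCompact (closure L) ∧ ∀ F ⊆ L, F.Finite → ∃ W, P W ∧ F ⊆ W := by
  obtain ⟨N, hNc, hN⟩ := exists_compact_mem_nhds (1 : G)
  have hstep : ∀ W : {W // P W}, ∃ W' : {W // P W},
      W.1 ⊆ W'.1 ∧ ∃ σ ∈ W'.1, σ ∉ (W.1 : Set G) * N := by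
    rintro ⟨W, hW⟩
    obtain ⟨W', hW', hWW', hnot⟩ := hP W hW _ (W.finite_toSet.isCompact.mul hNc)
    obtain ⟨σ, hσ, hσK⟩ := Set.not_subset.1 hnot
    exact ⟨⟨W', hW'⟩, hWW', σ, hσ, hσK⟩
  -- The points `σ` picked along the chain are `N`-separated, so it escapes every compact set.
  choose next hsub σ hσ hσK using hstep
  set c : ℕ → {W // P W} := fun k => next^[k] ⟨W₀, h₀⟩
  have hc_succ : ∀ k, c (k + 1) = next (c k) := fun k => Function.iterate_succ_apply' ..
  have hc : Monotone fun k => ((c k).1 : Set G) :=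
    monotone_nat_of_le_succ fun k => by rw [hc_succ]; exact Finset.coe_subset.2 (hsub _)
  refine ⟨⋃ k, ((c k).1 : Set G), fun hL => ?_, fun F hFL hF => ?_⟩
  · refine not_isCompact_closure_range_of_inv_mul_notMem hN (s := fun k => σ (c k))
      (fun i j hij hN' => hσK (c j) ?_)
      (hL.of_isClosed_subset isClosed_closure (closure_mono ?_))
    · have hi : σ (c i) ∈ ((c (i + 1)).1 : Set G) := by rw [hc_succ]; exact hσ (c i)
      replace hi : σ (c i) ∈ ((c j).1 : Set G) := hc hij hi
      exact ⟨_, hi, _, hN', mul_inv_cancel_left _ _⟩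
    · rintro _ ⟨k, rfl⟩
      exact Set.mem_iUnion.2 ⟨k + 1, by rw [hc_succ]; exact hσ (c k)⟩
  · obtain ⟨k, hk⟩ := hc.directed_le.exists_mem_subset_of_finset_subset_biUnion
      (s := hF.toFinset) (by simpa using hFL)
    exact ⟨(c k).1, (c k).2, by simpa using hk⟩

end TopologicalGroup

section CompactSpace

variable {X : Type*} [TopologicalSpace X] [CompactSpace X] [MeasurableSpace X]
  [OpensMeasurableSpace X] {μ : Measure X}

theorem Continuous.integrable_of_compactSpace [IsFiniteMeasure μ] {f : X → ℝ}
    (hf : Continuous f) : Integrable f μ :=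
  hf.integrable_of_hasCompactSupport (.of_compactSpace f)

theorem measure_support_eq_zero_of_integral_eq_zero [IsFiniteMeasure μ] {f : X → ℝ}
    (hf : Continuous f) (hf0 : 0 ≤ f) (h : ∫ x, f x ∂μ = 0) : μ (Function.support f) = 0 :=
  (Measure.measure_support_eq_zero_iff μ).2
    ((integral_eq_zero_iff_of_nonneg hf0 hf.integrable_of_compactSpace).1 h)

end CompactSpace

theorem sq_integral_le_integral_sq {Ω : Type*} [MeasurableSpace Ω] {μ : Measure Ω}
    [IsProbabilityMeasure μ] {f : Ω → ℝ} (hf : MemLp f 2 μ) :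
    (∫ x, f x ∂μ) ^ 2 ≤ ∫ x, f x ^ 2 ∂μ := by
  have h := ProbabilityTheory.variance_eq_sub hf
  have h0 := ProbabilityTheory.variance_nonneg f μ
  simp only [Pi.pow_apply] at h
  linarith

theorem sum_le_one_of_mul_inv_notMem {G : Type*} [Group G] {ψ : G → ℝ} (hψ : ∀ t, ψ t ≤ 1)
    {Q : Set G} (hψQ : ∀ t ∉ Q, ψ t = 0) {s : ℕ → G} (hs : ∀ i j, i ≠ j → s j * (s i)⁻¹ ∉ Q * Q⁻¹)
    (n : ℕ) (t : G) : ∑ i ∈ Finset.range n, ψ (s i * t) ≤ 1 := by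
  by_cases hex : ∃ i ∈ Finset.range n, s i * t ∈ Q
  · obtain ⟨i, hi, hiQ⟩ := hex
    rw [Finset.sum_eq_single_of_mem i hi fun j _ hji => hψQ _ fun hjQ => hs i j hji.symm ?_]
    · exact hψ _
    · rw [show s j * (s i)⁻¹ = s j * t * (s i * t)⁻¹ by group]
      exact Set.mul_mem_mul hjQ (Set.inv_mem_inv.2 hiQ)
  · push Not at hex
    rw [Finset.sum_eq_zero fun i hi => hψQ _ (hex i hi)]
    exact zero_le_one

namespace GCompactification

variable {G : Type*} [TopologicalSpace G] [Group G] {A : Set (G → ℂ)} {X : Type*}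
  [TopologicalSpace X] [CompactSpace X] [T2Space X] (C : GCompactification G A X)

theorem act_one (x : X) : C.act 1 x = x :=
  C.dense.induction_on (p := fun x => C.act 1 x = x) x
    (isClosed_eq (C.act_cont 1) continuous_id) fun t => by rw [C.act_eps, one_mul]

theorem gelfand_comp_eps {φ : X → ℂ} (hφ : Continuous φ) :
    C.gelfand (fun s => φ (C.eps s)) = φ :=
  C.dense.equalizer (C.gelfand_cont _ (C.mem_of_cont φ hφ)) hφ
    (funext fun t => C.gelfand_eps _ (C.mem_of_cont φ hφ) t)

theorem image2_act_closure_subset (K S : Set G) :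
    Set.image2 C.act K (closure (C.eps '' S)) ⊆ closure (C.eps '' (K * S)) := by
  rintro _ ⟨k, hk, x, hx, rfl⟩
  refine closure_mono ?_ (image_closure_subset_closure_image (C.act_cont k) ⟨x, hx, rfl⟩)
  rintro _ ⟨_, ⟨t, ht, rfl⟩, rfl⟩
  exact ⟨k * t, Set.mul_mem_mul hk ht, (C.act_eps k t).symm⟩

structure IsCutoff (ψ : X → ℝ) (P Q : Set G) : Prop where
  continuous : Continuous ψ
  nonneg : 0 ≤ ψ
  le_one : ψ ≤ 1
  eps_eq_one : ∀ t ∈ P, ψ (C.eps t) = 1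
  eps_eq_zero : ∀ t ∉ Q, ψ (C.eps t) = 0

theorem isCutoff_min_norm_gelfand {h : G → ℂ} (hA : h ∈ A) {P Q : Set G}
    (hP : ∀ t ∈ P, h t = 1) (hQ : ∀ t ∉ Q, h t = 0) :
    C.IsCutoff (fun x => min 1 ‖C.gelfand h x‖) P Q where
  continuous := continuous_const.min (C.gelfand_cont h hA).norm
  nonneg _ := le_min zero_le_one (norm_nonneg _)
  le_one _ := min_le_left _ _
  eps_eq_one t ht := by simp [C.gelfand_eps h hA, hP t ht]
  eps_eq_zero t ht := by simp [C.gelfand_eps h hA, hQ t ht]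

theorem exists_isCutoff_of_isASet {T : Set G} (hT : IsASet A T) {U : Set G} (hU : IsOpen U)
    (h1 : (1 : G) ∈ U) :
    ∃ V, IsOpen V ∧ (1 : G) ∈ V ∧ ∀ T₁ ⊆ T, ∃ ψ, C.IsCutoff ψ (V * T₁) (U * T₁) := by
  obtain ⟨V, hV, hV1, -, hsep⟩ := hT U hU h1
  refine ⟨V, hV, hV1, fun T₁ hT₁ => ?_⟩
  obtain ⟨h, hA, hP, hQ⟩ := hsep T₁ hT₁
  exact ⟨_, C.isCutoff_min_norm_gelfand hA hP hQ⟩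

def prodAct (ψ : X → ℝ) (W : Finset G) (x : X) : ℝ :=
  ∏ w ∈ W, ψ (C.act w x)

variable {C} {ψ : X → ℝ}

theorem continuous_prodAct (hψ : Continuous ψ) (W : Finset G) : Continuous (C.prodAct ψ W) :=
  continuous_finsetProd _ fun w _ => hψ.comp (C.act_cont w)

theorem prodAct_singleton_one : C.prodAct ψ {1} = ψ := by
  ext x
  simp [prodAct, C.act_one]

theorem prodAct_mul_prodAct_act_le [DecidableEq G] (h0 : 0 ≤ ψ) (h1 : ψ ≤ 1) (W : Finset G)
    (σ : G) (x : X) :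
    C.prodAct ψ W x * C.prodAct ψ W (C.act σ x) ≤ C.prodAct ψ (W ∪ W.image (· * σ)) x := by
  have hσ : C.prodAct ψ W (C.act σ x) = ∏ w ∈ W.image (· * σ), ψ (C.act w x) := by
    rw [Finset.prod_image fun a _ b _ => mul_right_cancel]
    simp_rw [C.act_mul]
    rfl
  rw [prodAct, hσ, ← Finset.prod_union_inter]
  exact mul_le_of_le_one_right (Finset.prod_nonneg fun _ _ => h0 _)
    (Finset.prod_le_one (fun _ _ => h0 _) fun _ _ => h1 _)

theorem support_prodAct_subset (hψ : Continuous ψ) {Q : Set G}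
    (hψQ : ∀ t ∉ Q, ψ (C.eps t) = 0) (W : Finset G) :
    Function.support (C.prodAct ψ W) ⊆ closure (C.eps '' {t | ∀ w ∈ W, w * t ∈ Q}) := by
  refine (C.dense.subset_closure_image_preimage_of_isOpen
    (isOpen_ne_fun (continuous_prodAct hψ W) continuous_const)).trans
    (closure_mono (Set.image_mono fun t ht w hw => ?_))
  by_contra hwt
  exact ht (Finset.prod_eq_zero hw (by rw [C.act_eps]; exact hψQ _ hwt))

variable (C) [MeasurableSpace X] (μ : Measure X)

/-- Tested against continuous functions only: that is what a left invariant mean on `𝒜` gives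
without a regularity argument. -/
def IntegralInvariant : Prop :=
  ∀ f : X → ℝ, Continuous f → ∀ s : G, ∫ x, f (C.act s x) ∂μ = ∫ x, f x ∂μ

theorem integralInvariant_of_mean
    (hinvariant : ∀ f ∈ A, ∀ s : G,
      ∫ x, C.gelfand (fun t => f (s * t)) x ∂μ = ∫ x, C.gelfand f x ∂μ) :
    C.IntegralInvariant μ := by
  intro f hf s
  have hφ : Continuous fun x => (f x : ℂ) := Complex.continuous_ofReal.comp hf
  have h := hinvariant _ (C.mem_of_cont _ hφ) s
  have hs : C.gelfand (fun t => (f (C.eps (s * t)) : ℂ)) = fun x => (f (C.act s x) : ℂ) := by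
    simp_rw [← C.act_eps]
    exact C.gelfand_comp_eps (hφ.comp (C.act_cont s))
  rw [hs, C.gelfand_comp_eps hφ] at h
  beta_reduce at h
  exact_mod_cast h

namespace IntegralInvariant

variable {C μ} (hμ : C.IntegralInvariant μ)
include hμ

theorem integral_comp_act_mul_comp_act {f g : X → ℝ} (hf : Continuous f) (hg : Continuous g)
    (a b : G) :
    ∫ x, f (C.act a x) * g (C.act b x) ∂μ = ∫ x, f x * g (C.act (b * a⁻¹) x) ∂μ := by
  have hfg : Continuous fun x => f x * g (C.act (b * a⁻¹) x) := hf.mul (hg.comp (C.act_cont _))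
  rw [← hμ _ hfg a]
  simp_rw [← C.act_mul, inv_mul_cancel_right]

variable [OpensMeasurableSpace X]

theorem integral_sum_comp_act [IsFiniteMeasure μ] {f : X → ℝ} (hf : Continuous f)
    (s : ℕ → G) (n : ℕ) : ∫ x, ∑ i ∈ Finset.range n, f (C.act (s i) x) ∂μ = n * ∫ x, f x ∂μ := by
  have hint : ∀ i, Integrable (fun x => f (C.act (s i) x)) μ := fun i =>
    (hf.comp (C.act_cont (s i))).integrable_of_compactSpace
  rw [integral_finsetSum _ fun i _ => hint i]
  simp [hμ f hf]

theorem exists_integral_mul_comp_act_pos [IsProbabilityMeasure μ] {f : X → ℝ} (hf : Continuous f)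
    (hpos : 0 < ∫ x, f x ∂μ) (s : ℕ → G) :
    ∃ i j, i ≠ j ∧ 0 < ∫ x, f x * f (C.act (s j * (s i)⁻¹) x) ∂μ := by
  -- Otherwise Cauchy–Schwarz for `∑_{i<n} f(sᵢ ·)` gives `n² (∫ f)² ≤ n ∫ f²` for every `n`.
  by_contra! hneg
  have hcont : ∀ i, Continuous fun x => f (C.act (s i) x) := fun i => hf.comp (C.act_cont _)
  have hint : ∀ i j, Integrable (fun x => f (C.act (s i) x) * f (C.act (s j) x)) μ :=
    fun i j => ((hcont i).mul (hcont j)).integrable_of_compactSpace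
  obtain ⟨n, hn⟩ := exists_nat_gt ((∫ x, f x ^ 2 ∂μ) / (∫ x, f x ∂μ) ^ 2)
  rw [div_lt_iff₀ (by positivity)] at hn
  have hrow : ∀ i ∈ Finset.range n,
      ∑ j ∈ Finset.range n, ∫ x, f (C.act (s i) x) * f (C.act (s j) x) ∂μ
        ≤ ∫ x, f x ^ 2 ∂μ := by
    intro i hi
    rw [← Finset.add_sum_erase _ _ hi]
    refine add_le_of_le_of_nonpos (by simp_rw [← sq]; exact (hμ _ (hf.pow 2) _).le)
      (Finset.sum_nonpos fun j hj => ?_)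
    rw [hμ.integral_comp_act_mul_comp_act hf hf]
    exact hneg i j (Finset.ne_of_mem_erase hj).symm
  have hsq := sq_integral_le_integral_sq (μ := μ)
    ((continuous_finsetSum (Finset.range n) fun i _ => hcont i).memLp_of_hasCompactSupport
      (.of_compactSpace _))
  rw [hμ.integral_sum_comp_act hf s n] at hsq
  simp_rw [sq (Finset.sum _ _), Finset.sum_mul_sum] at hsq
  rw [integral_finsetSum _ fun i _ => integrable_finsetSum _ fun j _ => hint i j] at hsq
  simp_rw [integral_finsetSum _ fun j _ => hint _ j] at hsq
  have hsum := hsq.trans (Finset.sum_le_sum hrow)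
  simp only [Finset.sum_const, Finset.card_range, nsmul_eq_mul] at hsum
  have hn0 : (0 : ℝ) < n :=
    pos_of_mul_pos_left ((integral_nonneg fun x => sq_nonneg (f x)).trans_lt hn) (sq_nonneg _)
  nlinarith [mul_lt_mul_of_pos_left hn hn0]

variable [IsTopologicalGroup G]

theorem integral_eq_zero_of_eps_eq_zero_off [IsProbabilityMeasure μ] [NoncompactSpace G]
    (hψ : Continuous ψ) (h0 : 0 ≤ ψ) (h1 : ψ ≤ 1) {Q : Set G} (hQ : IsCompact (closure Q))
    (hψQ : ∀ t ∉ Q, ψ (C.eps t) = 0) : ∫ x, ψ x ∂μ = 0 := by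
  obtain ⟨s, hs⟩ := exists_seq_mul_inv_notMem (hQ.mul hQ.inv)
  have hsum : ∀ n x, ∑ i ∈ Finset.range n, ψ (C.act (s i) x) ≤ 1 := fun n x =>
    C.dense.induction_on x (isClosed_le (continuous_finsetSum _ fun i _ =>
      hψ.comp (C.act_cont (s i))) continuous_const) fun t => by
      simp_rw [C.act_eps]
      exact sum_le_one_of_mul_inv_notMem (ψ := ψ ∘ C.eps) (fun t => h1 _) hψQ
        (fun i j hij hK => hs i j hij
          (Set.mul_subset_mul subset_closure (Set.inv_subset_inv.2 subset_closure) hK)) n t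
  have hn : ∀ n : ℕ, n * ∫ x, ψ x ∂μ ≤ 1 := fun n => by
    rw [← hμ.integral_sum_comp_act hψ s n]
    have hint : Integrable (fun x => ∑ i ∈ Finset.range n, ψ (C.act (s i) x)) μ :=
      (continuous_finsetSum _ fun i _ => hψ.comp (C.act_cont (s i))).integrable_of_compactSpace
    simpa using integral_mono hint (integrable_const (1 : ℝ)) (hsum n)
  refine le_antisymm (not_lt.1 fun hpos => ?_) (integral_nonneg h0)
  obtain ⟨n, hn'⟩ := exists_nat_gt (1 / ∫ x, ψ x ∂μ)
  rw [div_lt_iff₀ hpos] at hn'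
  linarith [hn n]

theorem measure_closure_eps_image_mul_eq_zero [IsFiniteMeasure μ] (hψ : Continuous ψ)
    (h0 : 0 ≤ ψ) (hψ0 : ∫ x, ψ x ∂μ = 0) {V S : Set G} (hV : (interior V).Nonempty)
    (hψV : ∀ t ∈ V * S, ψ (C.eps t) = 1) {K : Set G} (hK : IsCompact K) :
    μ (closure (C.eps '' (K * S))) = 0 := by
  obtain ⟨F, hF⟩ := compact_covered_by_mul_left_translates hK hV
  have hsub : C.eps '' (K * S) ⊆ ⋃ g ∈ F, {x | ψ (C.act g x) = 1} := by
    rintro _ ⟨_, ⟨k, hk, t, ht, rfl⟩, rfl⟩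
    obtain ⟨g, hg, hgk⟩ := Set.mem_iUnion₂.1 (hF hk)
    refine Set.mem_biUnion hg ?_
    rw [Set.mem_ofPred_eq, C.act_eps, ← mul_assoc]
    exact hψV _ (Set.mul_mem_mul hgk ht)
  have hnull : ∀ g, μ {x | ψ (C.act g x) = 1} = 0 := fun g =>
    measure_mono_null (fun x (hx : _ = _) => by simp [Function.mem_support, hx])
      (measure_support_eq_zero_of_integral_eq_zero (hψ.comp (C.act_cont g))
        (fun x => h0 (C.act g x)) ((hμ ψ hψ g).trans hψ0))
  refine measure_mono_null (closure_minimal hsub (isClosed_biUnion_finset fun g _ =>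
    isClosed_eq (hψ.comp (C.act_cont g)) continuous_const)) ?_
  exact (measure_biUnion_null_iff F.countable_toSet).2 fun g _ => hnull g

theorem exists_notMem_integral_prodAct_pos [IsProbabilityMeasure μ] [NoncompactSpace G]
    [DecidableEq G] (hψ : Continuous ψ) (h0 : 0 ≤ ψ) (h1 : ψ ≤ 1) {W : Finset G}
    (hW : 0 < ∫ x, C.prodAct ψ W x ∂μ) {K : Set G} (hK : IsCompact K) :
    ∃ σ ∉ K, 0 < ∫ x, C.prodAct ψ (W ∪ W.image (· * σ)) x ∂μ := by
  obtain ⟨s, hs⟩ := exists_seq_mul_inv_notMem hK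
  obtain ⟨i, j, hij, hpos⟩ := hμ.exists_integral_mul_comp_act_pos (continuous_prodAct hψ W) hW s
  refine ⟨_, hs i j hij, hpos.trans_le (integral_mono ?_
    (continuous_prodAct hψ _).integrable_of_compactSpace
    fun x => prodAct_mul_prodAct_act_le h0 h1 W _ x)⟩
  exact ((continuous_prodAct hψ W).mul
    ((continuous_prodAct hψ W).comp (C.act_cont _))).integrable_of_compactSpace

theorem measure_closure_eps_image_eq_zero [IsProbabilityMeasure μ] [NoncompactSpace G]
    {T U V : Set G} (hU : IsCompact (closure U)) (hV : (interior V).Nonempty)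
    (hcut : ∀ T₁ ⊆ T, ∃ ψ, C.IsCutoff ψ (V * T₁) (U * T₁)) {D : Set G}
    (hD : IsCompact (closure D)) (hDT : D ⊆ U * T) : μ (closure (C.eps '' D)) = 0 := by
  obtain ⟨ψ, hψ⟩ := hcut (T ∩ (U⁻¹ * D)) Set.inter_subset_left
  have hDT₁ : D ⊆ U * (T ∩ (U⁻¹ * D)) := by
    intro d hd
    obtain ⟨u, hu, t, ht, rfl⟩ := hDT hd
    exact Set.mul_mem_mul hu ⟨ht, u⁻¹, Set.inv_mem_inv.2 hu, u * t, hd, by group⟩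
  have hQ : IsCompact (closure (U * (T ∩ (U⁻¹ * D)))) := by
    refine ((hU.mul hU.inv).mul hD).closure_of_subset ?_
    rintro _ ⟨u, hu, t, ⟨-, v, hv, d, hd, rfl⟩, rfl⟩
    exact ⟨u * v, Set.mul_mem_mul (subset_closure hu) (Set.inv_subset_inv.2 subset_closure hv),
      d, subset_closure hd, mul_assoc u v d⟩
  have hψ0 := hμ.integral_eq_zero_of_eps_eq_zero_off hψ.continuous hψ.nonneg hψ.le_one hQ
    hψ.eps_eq_zero
  exact measure_mono_null
    (closure_mono (Set.image_mono (hDT₁.trans (Set.mul_subset_mul_right subset_closure))))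
    (hμ.measure_closure_eps_image_mul_eq_zero hψ.continuous hψ.nonneg hψ0 hV hψ.eps_eq_one hU)

theorem integral_eq_zero_of_rightTranslationCompact [IsProbabilityMeasure μ]
    [LocallyCompactSpace G] [NoncompactSpace G] (hψ : Continuous ψ) (h0 : 0 ≤ ψ) (h1 : ψ ≤ 1)
    {Q R : Set G} (hψQ : ∀ t ∉ Q, ψ (C.eps t) = 0) (hQR : Q ⊆ R)
    (hR : RightTranslationCompact R)
    (hnull : ∀ D, IsCompact (closure D) → D ⊆ Q → μ (closure (C.eps '' D)) = 0) :
    ∫ x, ψ x ∂μ = 0 := by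
  classical
  by_contra hne
  obtain ⟨L, hL, hLW⟩ := exists_not_isCompact_closure_of_forall_exists_not_subset
    (fun W => 1 ∈ W ∧ 0 < ∫ x, C.prodAct ψ W x ∂μ) (W₀ := {1})
    ⟨Finset.mem_singleton_self 1,
      by rw [prodAct_singleton_one]; exact (integral_nonneg h0).lt_of_ne' hne⟩
    fun W ⟨h1W, hW⟩ K hK => by
      obtain ⟨σ, hσK, hσ⟩ := hμ.exists_notMem_integral_prodAct_pos hψ h0 h1 hW hK
      refine ⟨_, ⟨Finset.mem_union_left _ h1W, hσ⟩, Finset.subset_union_left, fun h => hσK ?_⟩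
      exact h (Finset.mem_union_right _ (Finset.mem_image.2 ⟨1, h1W, one_mul σ⟩))
  obtain ⟨F, hFL, hF, hFc⟩ := hR L hL
  obtain ⟨W, ⟨h1W, hW⟩, hFW⟩ := hLW F hFL hF
  have hDc : IsCompact (closure {t | ∀ w ∈ W, w * t ∈ Q}) :=
    hFc.of_isClosed_subset isClosed_closure (closure_mono fun t ht =>
      Set.mem_iInter₂.2 fun b hb => hQR (ht b (hFW hb)))
  have hDQ : {t | ∀ w ∈ W, w * t ∈ Q} ⊆ Q := fun t ht => by simpa using ht 1 h1W
  refine hW.ne' (integral_eq_zero_of_ae ?_)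
  exact (Measure.measure_support_eq_zero_iff μ).1
    (measure_mono_null (support_prodAct_subset hψ hψQ W) (hnull _ hDc hDQ))

end IntegralInvariant

end GCompactification

theorem invariant_mean_vanishes_on_VT_general
    {G : Type*} [TopologicalSpace G] [Group G] [IsTopologicalGroup G]
    [LocallyCompactSpace G] [NoncompactSpace G]
    (A : Set (G → ℂ)) {X : Type*} [TopologicalSpace X] [CompactSpace X] [T2Space X]
    [MeasurableSpace X] [BorelSpace X]
    (C : GCompactification G A X)
    (T : Set G) (hAset : IsASet A T)
    (U : Set G) (hU : U ∈ nhds (1 : G)) (hUT : RightTranslationCompact (U * T))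
    (μ : Measure X) [IsProbabilityMeasure μ]
    (hinvariant : ∀ f ∈ A, ∀ s : G,
      ∫ x, C.gelfand (fun t => f (s * t)) x ∂μ = ∫ x, C.gelfand f x ∂μ) :
    ∀ V : Set G, V ∈ nhds (1 : G) → IsCompact (closure V) →
      μ (Set.image2 C.act V (closure (C.eps '' T))) = 0 := by
  have hμ : C.IntegralInvariant μ := C.integralInvariant_of_mean μ hinvariant
  obtain ⟨Uc, hUc, hUcU, hUcc⟩ := local_compact_nhds hU
  have hUo1 : (1 : G) ∈ interior Uc := mem_interior_iff_mem_nhds.2 hUc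
  obtain ⟨V₀, hV₀, hV₀1, hcut⟩ := C.exists_isCutoff_of_isASet hAset isOpen_interior hUo1
  have hV₀int : (interior V₀).Nonempty := ⟨1, hV₀.interior_eq.symm ▸ hV₀1⟩
  obtain ⟨ψ, hψ⟩ := hcut T subset_rfl
  have hψ0 : ∫ x, ψ x ∂μ = 0 :=
    hμ.integral_eq_zero_of_rightTranslationCompact hψ.continuous hψ.nonneg hψ.le_one
      hψ.eps_eq_zero (Set.mul_subset_mul_right (interior_subset.trans hUcU)) hUT
      fun _ => hμ.measure_closure_eps_image_eq_zero
        (hUcc.closure_of_subset interior_subset) hV₀int hcut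
  intro V _ hV
  exact measure_mono_null ((C.image2_act_closure_subset V T).trans
      (closure_mono (Set.image_mono (Set.mul_subset_mul_right subset_closure))))
    (hμ.measure_closure_eps_image_mul_eq_zero hψ.continuous hψ.nonneg hψ0 hV₀int
      hψ.eps_eq_one hV)

/-- Theorem 8.1: if `T` is an `𝒜`-set and `UT` is right translation-compact for some
neighbourhood `U` of `e`, then every left invariant mean `μ` on `𝒜` (regarded as a regular Borel
probability measure on `G^𝒜`) gives measure zero to `ε(V)·closure(ε(T))` for every relatively
compact neighbourhood `V` of `e`. -/
theorem invariant_mean_vanishes_on_VT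
    {G : Type*} [TopologicalSpace G] [Group G] [IsTopologicalGroup G]
    [LocallyCompactSpace G] [T2Space G] [NoncompactSpace G]
    (A : Set (G → ℂ)) {X : Type*} [TopologicalSpace X] [CompactSpace X] [T2Space X]
    [MeasurableSpace X] [BorelSpace X]
    (C : GCompactification G A X)
    (hone : (fun _ : G => (1 : ℂ)) ∈ A)
    (hlinv : ∀ f ∈ A, ∀ s : G, (fun t => f (s * t)) ∈ A)
    (hjc : Continuous fun p : G × X => C.act p.1 p.2)
    (T : Set G) (hAset : IsASet A T)
    (U : Set G) (hU : U ∈ nhds (1 : G)) (hUT : RightTranslationCompact (U * T))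
    (μ : Measure X) [IsProbabilityMeasure μ] [μ.Regular]
    (hinvariant : ∀ f ∈ A, ∀ s : G,
      ∫ x, C.gelfand (fun t => f (s * t)) x ∂μ = ∫ x, C.gelfand f x ∂μ) :
    ∀ V : Set G, V ∈ nhds (1 : G) → IsCompact (closure V) →
      μ (Set.image2 C.act V (closure (C.eps '' T))) = 0 :=
  invariant_mean_vanishes_on_VT_general A C T hAset U hU hUT μ hinvariant
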